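/- For any b, the monotonic network satisfies the left-inverse inequality ψ(φ(b)) ≥ b, where φ(b) = min_g max_n (w_{g,n}·b + β_{g,n}) and ψ(p) = max_g min_n (w_{g,n}⁻¹·(p − β_{g,n})), with all w_{g,n} > 0. -/
import Mathlib


/-- Left-inverse inequality for the monotonic network with shared parameters:
`ψ (φ b) ≥ b` where `φ(b) = min_g max_n (w g n * b + β g n)` and
`ψ(p) = max_g min_n ((w g n)⁻¹ * (p - β g n))`, all weights positive. -/
theorem monotonic_network_left_inverse_ge
    {G N : Type*} [Fintype G] [Fintype N] [Nonempty G] [Nonempty N]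
    (w β : G → N → ℝ) (hw : ∀ g n, 0 < w g n) (b : ℝ) :
    b ≤ Finset.univ.sup' Finset.univ_nonempty (fun g : G =>
          Finset.univ.inf' Finset.univ_nonempty (fun n : N =>
            (w g n)⁻¹ *
              ((Finset.univ.inf' Finset.univ_nonempty (fun g' : G =>
                  Finset.univ.sup' Finset.univ_nonempty
                    (fun n' : N => w g' n' * b + β g' n'))) - β g n))) := by
  set φ := Finset.univ.inf' Finset.univ_nonempty (fun g' : G =>
      Finset.univ.sup' Finset.univ_nonempty
        (fun n' : N => w g' n' * b + β g' n')) with hφ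
  obtain ⟨g0, -, hg0⟩ := Finset.exists_mem_eq_inf' (Finset.univ_nonempty)
    (fun g' : G => Finset.univ.sup' Finset.univ_nonempty
        (fun n' : N => w g' n' * b + β g' n'))
  refine le_trans ?_ (Finset.le_sup' _ (Finset.mem_univ g0))
  refine Finset.le_inf' _ _ (fun n _ => ?_)
  have h1 : w g0 n * b + β g0 n ≤ φ := by
    rw [hφ, hg0]
    exact Finset.le_sup' (fun n' : N => w g0 n' * b + β g0 n') (Finset.mem_univ n)
  have hwn := hw g0 n
  rw [inv_mul_eq_div, le_div_iff₀ hwn, mul_comm]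
  linarith
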